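/- In the setting of the discrete pNACOK scheme, suppose τ ≤ 1/(3C₀), A ≥ 0, B ≥ 0, and suppose U^{n−1}, U^n, U^{n+1} ∈ V satisfy the second-order BDF scheme (3U^{n+1} − 4U^n + U^{n−1})/(2τ) = −ε L U^{n+1} − (1/ε)(2W'(U^n) − W'(U^{n−1})) − γ B Λ(U^{n+1} − 2U^n + U^{n−1}) − A (U^{n+1} − 2U^n + U^{n−1}) − γ Λ(2U^n − U^{n−1} − ω𝟙) − M ⟨2U^n − U^{n−1} − ω𝟙, 𝟙⟩ 𝟙, where W' is applied componentwise. Then the modified energy is nonincreasing: Ẽ(U^{n+1}, U^n) ≤ Ẽ(U^n, U^{n−1}). -/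

import Mathlib

/-!
Test the scheme against the increment `δ = U1 - U0`, with `δ₀ = U0 - Um1`. For a self-adjoint
positive semidefinite `T` the identity `2⟨T x, x - y⟩ = ⟨T x, x⟩ - ⟨T y, y⟩ + ⟨T (x - y), x - y⟩`
turns every implicit term, and the extrapolated part `2U0 - Um1 = U1 - (δ - δ₀)` of the explicit
ones, into an energy difference. The explicit double-well term is controlled by the descent lemma
for `W` (`|W''| ≤ LW`) and by the Lipschitz bound on `W'`; the extrapolation errors of the `Λ` and
mass terms are at most `K` and `|Ω|` times `‖δ - δ₀‖ ‖δ‖`. The BDF2 difference quotient contributes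
`‖δ‖² / τ + (‖δ‖² - ‖δ₀‖² + ‖δ - δ₀‖²) / (4τ)`, which absorbs all remainders by Young's inequality
as soon as `1 / τ ≥ 3 C₀`; the terms `C₀ (‖δ‖² - ‖δ₀‖²)` telescope in the modified energy.
-/

open Real

/-- Discrete inner product `⟨f, g⟩ = c · Σ_j f_j g_j` on `V = Fin m → ℝ`. -/
noncomputable def dip (m : ℕ) (c : ℝ) (f g : Fin m → ℝ) : ℝ :=
  c * ∑ j, f j * g j

/-- Discrete norm induced by `dip`. -/
noncomputable def dnorm (m : ℕ) (c : ℝ) (f : Fin m → ℝ) : ℝ :=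
  Real.sqrt (dip m c f f)

/-- The all-ones vector `𝟙`. -/
def ones (m : ℕ) : Fin m → ℝ := fun _ => 1

/-- Discrete pNOK energy
`E(U) = (ε/2)⟨LU,U⟩ + (1/ε)⟨W(U),𝟙⟩ + (γ/2)⟨Λ(U−ω𝟙),U−ω𝟙⟩ + (M/2)⟨U−ω𝟙,𝟙⟩²`. -/
noncomputable def discreteEnergy (m : ℕ) (c ε γ M ω : ℝ)
    (L Λ : (Fin m → ℝ) →ₗ[ℝ] (Fin m → ℝ)) (W : ℝ → ℝ) (U : Fin m → ℝ) : ℝ :=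
  ε / 2 * dip m c (L U) U + (1 / ε) * dip m c (fun j => W (U j)) (ones m)
    + γ / 2 * dip m c (Λ (U - ω • ones m)) (U - ω • ones m)
    + M / 2 * (dip m c (U - ω • ones m) (ones m)) ^ 2

/-- Modified energy
`Ẽ(U,V) = E(U) + (A/2 + 1/(4τ) + C₀)‖U−V‖² + (γB/2)⟨Λ(U−V),U−V⟩`. -/
noncomputable def modifiedEnergy (m : ℕ) (c ε γ M ω A B τ C₀ : ℝ)
    (L Λ : (Fin m → ℝ) →ₗ[ℝ] (Fin m → ℝ)) (W : ℝ → ℝ) (U V : Fin m → ℝ) : ℝ :=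
  discreteEnergy m c ε γ M ω L Λ W U
    + (A / 2 + 1 / (4 * τ) + C₀) * (dnorm m c (U - V)) ^ 2
    + γ * B / 2 * dip m c (Λ (U - V)) (U - V)

section DiscreteInnerProduct

variable {m : ℕ} {c : ℝ}

lemma dip_comm (f g : Fin m → ℝ) : dip m c f g = dip m c g f := by
  simp only [dip, mul_comm (f _)]

lemma dip_add_left (f g h : Fin m → ℝ) :
    dip m c (f + g) h = dip m c f h + dip m c g h := by
  simp only [dip, Pi.add_apply, add_mul, Finset.sum_add_distrib, mul_add]

lemma dip_sub_left (f g h : Fin m → ℝ) :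
    dip m c (f - g) h = dip m c f h - dip m c g h := by
  simp only [dip, Pi.sub_apply, sub_mul, Finset.sum_sub_distrib, mul_sub]

lemma dip_neg_left (f h : Fin m → ℝ) : dip m c (-f) h = -dip m c f h := by
  simp only [dip, Pi.neg_apply, neg_mul, Finset.sum_neg_distrib, mul_neg]

lemma dip_smul_left (r : ℝ) (f h : Fin m → ℝ) :
    dip m c (r • f) h = r * dip m c f h := by
  simp only [dip, Pi.smul_apply, smul_eq_mul, mul_assoc, ← Finset.mul_sum]
  ring

lemma dip_sub_right (f g h : Fin m → ℝ) :
    dip m c f (g - h) = dip m c f g - dip m c f h := by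
  rw [dip_comm, dip_sub_left, dip_comm g, dip_comm h]

lemma dip_self_nonneg (hc : 0 ≤ c) (f : Fin m → ℝ) : 0 ≤ dip m c f f :=
  mul_nonneg hc (Finset.sum_nonneg fun j _ => mul_self_nonneg (f j))

lemma dnorm_sq (hc : 0 ≤ c) (f : Fin m → ℝ) : dnorm m c f ^ 2 = dip m c f f :=
  Real.sq_sqrt (dip_self_nonneg hc f)

lemma dnorm_ones_sq (hc : 0 ≤ c) : dnorm m c (ones m) ^ 2 = c * m := by
  simp [dnorm_sq hc, dip, ones]

lemma abs_dip_le_dnorm_mul_dnorm (hc : 0 ≤ c) (f g : Fin m → ℝ) :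
    |dip m c f g| ≤ dnorm m c f * dnorm m c g := by
  rw [dnorm, dnorm, ← Real.sqrt_mul (dip_self_nonneg hc f), ← Real.sqrt_sq_eq_abs]
  refine Real.sqrt_le_sqrt ?_
  have cauchy_schwarz := Finset.sum_mul_sq_le_sq_mul_sq Finset.univ f g
  calc dip m c f g ^ 2 = c ^ 2 * (∑ j, f j * g j) ^ 2 := by rw [dip, mul_pow]
    _ ≤ c ^ 2 * ((∑ j, f j ^ 2) * ∑ j, g j ^ 2) := by gcongr
    _ = dip m c f f * dip m c g g := by simp only [dip, sq]; ring

lemma dnorm_le_mul_dnorm_of_abs_le (hc : 0 ≤ c) {k : ℝ} (hk : 0 ≤ k) {f g : Fin m → ℝ}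
    (hfg : ∀ j, |f j| ≤ k * |g j|) : dnorm m c f ≤ k * dnorm m c g := by
  rw [dnorm, dnorm, ← Real.sqrt_sq hk, ← Real.sqrt_mul (sq_nonneg k)]
  refine Real.sqrt_le_sqrt ?_
  rw [dip, dip, mul_left_comm, Finset.mul_sum _ _ (k ^ 2)]
  refine mul_le_mul_of_nonneg_left (Finset.sum_le_sum fun j _ => ?_) hc
  rw [← abs_mul_abs_self (f j), ← abs_mul_abs_self (g j)]
  nlinarith [hfg j, abs_nonneg (f j)]

lemma dip_ones_mul_dip_ones_le (hc : 0 ≤ c) (f g : Fin m → ℝ) :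
    dip m c f (ones m) * dip m c g (ones m) ≤ c * m * (dnorm m c f * dnorm m c g) := by
  calc dip m c f (ones m) * dip m c g (ones m)
      ≤ |dip m c f (ones m)| * |dip m c g (ones m)| := by rw [← abs_mul]; exact le_abs_self _
    _ ≤ (dnorm m c f * dnorm m c (ones m)) * (dnorm m c g * dnorm m c (ones m)) := by
      exact mul_le_mul (abs_dip_le_dnorm_mul_dnorm hc _ _) (abs_dip_le_dnorm_mul_dnorm hc _ _)
        (abs_nonneg _) (mul_nonneg (Real.sqrt_nonneg _) (Real.sqrt_nonneg _))
    _ = c * m * (dnorm m c f * dnorm m c g) := by rw [← dnorm_ones_sq hc]; ring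

lemma two_mul_dip_map_sub (T : (Fin m → ℝ) →ₗ[ℝ] (Fin m → ℝ))
    (hT : ∀ f g, dip m c (T f) g = dip m c f (T g)) (x y : Fin m → ℝ) :
    2 * dip m c (T x) (x - y) =
      dip m c (T x) x - dip m c (T y) y + dip m c (T (x - y)) (x - y) := by
  have hyx : dip m c (T y) x = dip m c (T x) y := by rw [hT, dip_comm]
  simp only [map_sub, dip_sub_left, dip_sub_right, hyx]
  ring

lemma two_mul_dip_sub (x y : Fin m → ℝ) :
    2 * dip m c x (x - y) = dip m c x x - dip m c y y + dip m c (x - y) (x - y) :=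
  two_mul_dip_map_sub LinearMap.id (fun _ _ => rfl) x y

lemma dip_map_sub_dip_map_le (T : (Fin m → ℝ) →ₗ[ℝ] (Fin m → ℝ))
    (hT : ∀ f g, dip m c (T f) g = dip m c f (T g)) (hT₀ : ∀ f, 0 ≤ dip m c (T f) f)
    (x y : Fin m → ℝ) :
    dip m c (T x) x - dip m c (T y) y ≤ 2 * dip m c (T x) (x - y) := by
  linarith [two_mul_dip_map_sub T hT x y, hT₀ (x - y)]

end DiscreteInnerProduct

section DoubleWell

variable {W : ℝ → ℝ} {LW : ℝ}

lemma abs_deriv_sub_deriv_le (hW : ContDiff ℝ 2 W) (hW2 : ∀ s, |deriv (deriv W) s| ≤ LW)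
    (s t : ℝ) : |deriv W t - deriv W s| ≤ LW * |t - s| := by
  have hW' : Differentiable ℝ (deriv W) :=
    ((contDiff_succ_iff_deriv (n := 1)).mp hW).2.2.differentiable one_ne_zero
  simpa only [Real.norm_eq_abs] using Convex.norm_image_sub_le_of_norm_deriv_le
    (fun x _ => hW' x) (fun x _ => hW2 x) convex_univ (Set.mem_univ s) (Set.mem_univ t)

lemma ConvexOn.add_mul_sub_le_of_hasDerivAt {f : ℝ → ℝ} {f' x : ℝ}
    (hf : ConvexOn ℝ Set.univ f) (hf' : HasDerivAt f f' x) (y : ℝ) :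
    f x + f' * (y - x) ≤ f y := by
  rcases lt_trichotomy x y with hxy | rfl | hxy
  · have := hf.le_slope_of_hasDerivAt (Set.mem_univ x) (Set.mem_univ y) hxy hf'
    rw [slope_def_field, le_div_iff₀ (sub_pos.mpr hxy)] at this
    linarith
  · simp
  · have := hf.slope_le_of_hasDerivAt (Set.mem_univ y) (Set.mem_univ x) hxy hf'
    rw [slope_def_field, div_le_iff₀ (sub_pos.mpr hxy)] at this
    linarith

-- The descent lemma: `u ↦ LW / 2 * u ^ 2 - W u` is convex, its derivative being monotone.
lemma le_add_deriv_mul_add_sq (hW : Differentiable ℝ W)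
    (hW' : ∀ s t, |deriv W t - deriv W s| ≤ LW * |t - s|) (s t : ℝ) :
    W t ≤ W s + deriv W s * (t - s) + LW / 2 * (t - s) ^ 2 := by
  set g : ℝ → ℝ := fun u => LW / 2 * u ^ 2 - W u
  have hg : ∀ u, HasDerivAt g (LW * u - deriv W u) u := fun u =>
    (((hasDerivAt_pow 2 u).const_mul (LW / 2)).sub (hW u).hasDerivAt).congr_deriv
      (by norm_num; ring)
  have hg_mono : Monotone (deriv g) := fun u v huv => by
    have := (le_abs_self _).trans (hW' u v)
    rw [abs_of_nonneg (sub_nonneg.mpr huv)] at this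
    rw [(hg u).deriv, (hg v).deriv]
    linarith
  have := (hg_mono.convexOn_univ_of_deriv fun u => (hg u).differentiableAt)
    |>.add_mul_sub_le_of_hasDerivAt (hg s) t
  simp only [g] at this
  linarith

end DoubleWell

section DiscretePotential

variable {m : ℕ} {c : ℝ} {W : ℝ → ℝ} {LW : ℝ}

lemma dip_comp_sub_dip_comp_le (hc : 0 ≤ c) (hW : Differentiable ℝ W)
    (hW' : ∀ s t, |deriv W t - deriv W s| ≤ LW * |t - s|) (U V : Fin m → ℝ) :
    dip m c (fun j => W (V j)) (ones m) - dip m c (fun j => W (U j)) (ones m) ≤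
      dip m c (fun j => deriv W (U j)) (V - U) + LW / 2 * dnorm m c (V - U) ^ 2 := by
  rw [dnorm_sq hc]
  calc dip m c (fun j => W (V j)) (ones m) - dip m c (fun j => W (U j)) (ones m)
      = c * ∑ j, (W (V j) - W (U j)) := by
        simp only [dip, ones, mul_one, Finset.sum_sub_distrib, mul_sub]
    _ ≤ c * ∑ j, (deriv W (U j) * (V - U) j + LW / 2 * ((V - U) j * (V - U) j)) := by
        gcongr with j
        have := le_add_deriv_mul_add_sq hW hW' (U j) (V j)
        simp only [Pi.sub_apply]
        linarith
    _ = _ := by simp only [dip, Finset.sum_add_distrib, ← Finset.mul_sum]; ring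

lemma dnorm_deriv_comp_sub_le (hc : 0 ≤ c) (hLW : 0 ≤ LW)
    (hW' : ∀ s t, |deriv W t - deriv W s| ≤ LW * |t - s|) (U V : Fin m → ℝ) :
    dnorm m c (fun j => deriv W (V j) - deriv W (U j)) ≤ LW * dnorm m c (V - U) :=
  dnorm_le_mul_dnorm_of_abs_le hc hLW fun j => hW' (U j) (V j)

lemma dip_comp_sub_dip_comp_le_extrapolated (hc : 0 ≤ c) (hLW : 0 ≤ LW)
    (hW : Differentiable ℝ W) (hW' : ∀ s t, |deriv W t - deriv W s| ≤ LW * |t - s|)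
    (Um1 U0 U1 : Fin m → ℝ) :
    dip m c (fun j => W (U1 j)) (ones m) - dip m c (fun j => W (U0 j)) (ones m) ≤
      dip m c (fun j => 2 * deriv W (U0 j) - deriv W (Um1 j)) (U1 - U0)
        + LW / 2 * dnorm m c (U1 - U0) ^ 2
        + LW * (dnorm m c (U0 - Um1) * dnorm m c (U1 - U0)) := by
  have hsplit : (fun j => 2 * deriv W (U0 j) - deriv W (Um1 j)) =
      (fun j => deriv W (U0 j)) + fun j => deriv W (U0 j) - deriv W (Um1 j) := by
    ext j; simp only [Pi.add_apply]; ring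
  have hlip : |dip m c (fun j => deriv W (U0 j) - deriv W (Um1 j)) (U1 - U0)| ≤
      LW * (dnorm m c (U0 - Um1) * dnorm m c (U1 - U0)) := by
    rw [← mul_assoc]
    exact (abs_dip_le_dnorm_mul_dnorm hc _ _).trans <| mul_le_mul_of_nonneg_right
      (dnorm_deriv_comp_sub_le hc hLW hW' Um1 U0) (Real.sqrt_nonneg _)
  rw [hsplit, dip_add_left]
  linarith [dip_comp_sub_dip_comp_le hc hW hW' U0 U1, (abs_le.mp hlip).1]

end DiscretePotential

section Scheme

variable {m : ℕ} {c : ℝ} {L Λ : (Fin m → ℝ) →ₗ[ℝ] (Fin m → ℝ)} {K : ℝ} {W : ℝ → ℝ} {LW : ℝ}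
  {ε γ M τ A B ω : ℝ}

theorem discreteEnergy_sub_le_of_bdf2 (hc : 0 ≤ c)
    (hLsa : ∀ f g, dip m c (L f) g = dip m c f (L g)) (hLpsd : ∀ f, 0 ≤ dip m c (L f) f)
    (hΛsa : ∀ f g, dip m c (Λ f) g = dip m c f (Λ g)) (hΛpsd : ∀ f, 0 ≤ dip m c (Λ f) f)
    (hΛbdd : ∀ f g, dip m c (Λ f) g ≤ K * dnorm m c f * dnorm m c g)
    (hLW : 0 ≤ LW) (hW : Differentiable ℝ W)
    (hW' : ∀ s t, |deriv W t - deriv W s| ≤ LW * |t - s|)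
    (hε : 0 < ε) (hγ : 0 ≤ γ) (hM : 0 ≤ M) (hA : 0 ≤ A) (hB : 0 ≤ B)
    {Um1 U0 U1 : Fin m → ℝ}
    (hscheme : (1 / (2 * τ)) • ((3:ℝ) • U1 - (4:ℝ) • U0 + Um1) =
      -(ε • L U1)
        - (1 / ε) • (fun j => 2 * deriv W (U0 j) - deriv W (Um1 j))
        - (γ * B) • Λ (U1 - (2:ℝ) • U0 + Um1)
        - A • (U1 - (2:ℝ) • U0 + Um1)
        - γ • Λ ((2:ℝ) • U0 - Um1 - ω • ones m)
        - (M * dip m c ((2:ℝ) • U0 - Um1 - ω • ones m) (ones m)) • ones m) :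
    discreteEnergy m c ε γ M ω L Λ W U1 - discreteEnergy m c ε γ M ω L Λ W U0
      + 1 / τ * dnorm m c (U1 - U0) ^ 2
      + 1 / (4 * τ) * (dnorm m c (U1 - U0) ^ 2 - dnorm m c (U0 - Um1) ^ 2
        + dnorm m c (U1 - (2:ℝ) • U0 + Um1) ^ 2)
      + γ * B / 2 * (dip m c (Λ (U1 - U0)) (U1 - U0) - dip m c (Λ (U0 - Um1)) (U0 - Um1))
      + A / 2 * (dnorm m c (U1 - U0) ^ 2 - dnorm m c (U0 - Um1) ^ 2)
      ≤ LW / (2 * ε) * dnorm m c (U1 - U0) ^ 2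
        + LW / ε * (dnorm m c (U0 - Um1) * dnorm m c (U1 - U0))
        + (γ * K + M * (c * m)) * (dnorm m c (U1 - (2:ℝ) • U0 + Um1) * dnorm m c (U1 - U0)) := by
  have hbdf : (3:ℝ) • U1 - (4:ℝ) • U0 + Um1 = (2:ℝ) • (U1 - U0) + (U1 - (2:ℝ) • U0 + Um1) := by
    module
  have hext : (2:ℝ) • U0 - Um1 - ω • ones m = (U1 - ω • ones m) - (U1 - (2:ℝ) • U0 + Um1) := by
    module
  have he : U1 - (2:ℝ) • U0 + Um1 = (U1 - U0) - (U0 - Um1) := by module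
  have hP : (U1 - ω • ones m) - (U0 - ω • ones m) = U1 - U0 := sub_sub_sub_cancel_right _ _ _
  have hL := dip_map_sub_dip_map_le L hLsa hLpsd U1 U0
  have hΛP := dip_map_sub_dip_map_le Λ hΛsa hΛpsd (U1 - ω • ones m) (U0 - ω • ones m)
  have hp := congrArg (dip m c · (ones m)) hP
  have hΛδ := two_mul_dip_map_sub Λ hΛsa (U1 - U0) (U0 - Um1)
  have hδ := two_mul_dip_sub (c := c) (U1 - U0) (U0 - Um1)
  have hWe := dip_comp_sub_dip_comp_le_extrapolated hc hLW hW hW' Um1 U0 U1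
  rw [hbdf, hext, map_sub] at hscheme
  rw [hP] at hΛP
  rw [← he] at hΛδ hδ
  rw [dip_sub_left] at hp
  unfold discreteEnergy
  simp only [dnorm_sq hc] at hWe ⊢
  set e := U1 - (2:ℝ) • U0 + Um1
  set δ := U1 - U0
  set δ₀ := U0 - Um1
  set P₁ := U1 - ω • ones m
  set P₀ := U0 - ω • ones m
  have tested := congrArg (dip m c · δ) hscheme
  simp only [dip_smul_left, dip_add_left, dip_sub_left, dip_neg_left] at tested
  have hΛe := hΛbdd e δ
  have hMe := dip_ones_mul_dip_ones_le hc e δ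
  have hΛeδ : dip m c (Λ e) δ = dip m c (Λ δ) e := by rw [hΛsa, dip_comm]
  rw [hΛeδ] at hΛe
  rw [hΛeδ, dip_comm (ones m) δ, dip_comm e δ] at tested
  linear_combination tested + ε / 2 * hL + 1 / ε * hWe + γ / 2 * hΛP
    + M * dip m c P₁ (ones m) * hp + M / 2 * sq_nonneg (dip m c P₁ (ones m) - dip m c P₀ (ones m))
    - γ * B / 2 * hΛδ + γ * B / 2 * hΛpsd e
    - (1 / (4 * τ) + A / 2) * hδ + A / 2 * dip_self_nonneg hc e
    + γ * hΛe + M * hMe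

end Scheme

-- Young: `2ab ≤ a ^ 2 + b ^ 2` and `2ea ≤ 3e ^ 2 / 4 + 4a ^ 2 / 3`.
lemma bdf2_remainder_le {s p q a b e : ℝ} (hp : 0 ≤ p) (hq : 0 ≤ q) (hs : 3 * (p + q) ≤ s) :
    p * a ^ 2 + 2 * p * (b * a) + 2 * q * (e * a) + (p + q) * (a ^ 2 - b ^ 2) ≤
      s * a ^ 2 + s / 4 * e ^ 2 := by
  nlinarith [mul_nonneg hp (sq_nonneg (a - b)), mul_nonneg hq (sq_nonneg (3 * e - 4 * a)),
    mul_nonneg hq (sq_nonneg b), mul_nonneg hq (sq_nonneg a),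
    mul_nonneg (sub_nonneg.mpr hs) (sq_nonneg a), mul_nonneg (sub_nonneg.mpr hs) (sq_nonneg e)]

theorem bdf2_modified_energy_dissipation (m : ℕ) (c : ℝ) (hc : 0 < c)
    (L Λ : (Fin m → ℝ) →ₗ[ℝ] (Fin m → ℝ))
    (hLsa : ∀ f g, dip m c (L f) g = dip m c f (L g))
    (hLpsd : ∀ f, 0 ≤ dip m c (L f) f)
    (hΛsa : ∀ f g, dip m c (Λ f) g = dip m c f (Λ g))
    (hΛpsd : ∀ f, 0 ≤ dip m c (Λ f) f)
    (K : ℝ) (hK : 0 ≤ K)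
    (hΛbdd : ∀ f g, dip m c (Λ f) g ≤ K * dnorm m c f * dnorm m c g)
    (W : ℝ → ℝ) (hW : ContDiff ℝ 2 W)
    (LW : ℝ) (hW2 : ∀ s : ℝ, |deriv (deriv W) s| ≤ LW)
    (ε γ M τ : ℝ) (hε : 0 < ε) (hγ : 0 < γ) (hM : 0 < M) (hτ : 0 < τ)
    (A B : ℝ) (hA : 0 ≤ A) (hB : 0 ≤ B) (ω : ℝ)
    (C₀ : ℝ) (hC₀ : C₀ = LW / (2 * ε) + γ * K / 2 + M * (c * m) / 2)
    (hτC : τ ≤ 1 / (3 * C₀))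
    (Um1 U0 U1 : Fin m → ℝ)
    (hscheme : (1 / (2 * τ)) • ((3:ℝ) • U1 - (4:ℝ) • U0 + Um1) =
      -(ε • L U1)
        - (1 / ε) • (fun j => 2 * deriv W (U0 j) - deriv W (Um1 j))
        - (γ * B) • Λ (U1 - (2:ℝ) • U0 + Um1)
        - A • (U1 - (2:ℝ) • U0 + Um1)
        - γ • Λ ((2:ℝ) • U0 - Um1 - ω • ones m)
        - (M * dip m c ((2:ℝ) • U0 - Um1 - ω • ones m) (ones m)) • ones m) :
    modifiedEnergy m c ε γ M ω A B τ C₀ L Λ W U1 U0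
      ≤ modifiedEnergy m c ε γ M ω A B τ C₀ L Λ W U0 Um1 := by
  have hLW : 0 ≤ LW := (abs_nonneg _).trans (hW2 0)
  have hC₀_nonneg : 0 ≤ C₀ := by rw [hC₀]; positivity
  have hstep : 3 * C₀ ≤ 1 / τ := by
    rw [le_div_iff₀ hτ]
    calc 3 * C₀ * τ ≤ 3 * C₀ * (3 * C₀)⁻¹ := by rw [← one_div]; gcongr
      _ ≤ 1 := mul_inv_le_one
  subst hC₀
  have henergy := discreteEnergy_sub_le_of_bdf2 hc.le hLsa hLpsd hΛsa hΛpsd hΛbdd hLW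
    (hW.differentiable (by norm_num)) (abs_deriv_sub_deriv_le hW hW2) hε hγ.le hM.le hA hB hscheme
  have hremainder := bdf2_remainder_le (s := 1 / τ) (p := LW / (2 * ε))
    (q := (γ * K + M * (c * m)) / 2) (a := dnorm m c (U1 - U0)) (b := dnorm m c (U0 - Um1))
    (e := dnorm m c (U1 - (2:ℝ) • U0 + Um1)) (by positivity) (by positivity) (by linarith)
  unfold modifiedEnergy
  linear_combination henergy + hremainder
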